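/- Every first-countable Hausdorff paratopological gyrogroup G satisfies Hs(G) ≤ ω. -/

import Mathlib

open Pointwise

/-- A gyrogroup: a groupoid with identity, inverses, gyroautomorphisms satisfying
the left gyroassociative law and the left loop property. -/
class Gyrogroup (G : Type*) extends Zero G, Neg G, Add G where
  zero_add : ∀ a : G, 0 + a = a
  add_zero : ∀ a : G, a + 0 = a
  neg_add_cancel : ∀ a : G, -a + a = 0
  add_neg_cancel : ∀ a : G, a + -a = 0
  gyr : G → G → G → G
  gyr_bijective : ∀ a b : G, Function.Bijective (gyr a b)
  gyr_add : ∀ a b x y : G, gyr a b (x + y) = gyr a b x + gyr a b y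
  gyrassoc : ∀ a b c : G, a + (b + c) = a + b + gyr a b c
  loop : ∀ a b : G, gyr (a + b) b = gyr a b

/-- The right cosubtraction a ⊟ b = a ⊕ gyr[a,b](⊖b). -/
def boxminus {G : Type*} [Gyrogroup G] (a b : G) : G := a + Gyrogroup.gyr a b (-b)

/-- The Hausdorff number: the minimum cardinal κ such that every neighborhood U of 0
admits a family γ of neighborhoods of 0 with |γ| ≤ κ and ⋂_{V∈γ}(V ⊟ V) ⊆ U. -/
noncomputable def Hs (G : Type*) [Gyrogroup G] [TopologicalSpace G] : Cardinal :=
  sInf {κ : Cardinal | ∀ U ∈ nhds (0 : G), ∃ γ : Set (Set G),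
    (∀ V ∈ γ, V ∈ nhds (0 : G)) ∧ Cardinal.mk γ ≤ κ ∧
      (⋂ V ∈ γ, Set.image2 boxminus V V) ⊆ U}

/-
If `x ≠ 0`, the Hausdorff property and continuity of `y ↦ x ⊕ y` give a neighbourhood `V` of `0`
with `(x ⊕ V) ∩ V = ∅`. Since `(a ⊟ b) ⊕ b = a`, any `x = a ⊟ b` with `a, b ∈ V` would satisfy
`x ⊕ b = a ∈ V`; hence `x ∉ V ⊟ V`. Consequently the sets `V ⊟ V`, for `V` running through a
countable neighbourhood base at `0`, already intersect to `{0}`, which lies in every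
neighbourhood of `0`.
-/

namespace Gyrogroup

variable {G : Type*} [Gyrogroup G]

theorem gyr_injective (a b : G) : Function.Injective (gyr a b) :=
  (gyr_bijective a b).injective

theorem add_right_injective (a : G) : Function.Injective (a + ·) := by
  intro x y h
  have h' : -a + a + gyr (-a) a x = -a + a + gyr (-a) a y := by
    rw [← gyrassoc, ← gyrassoc]
    exact congrArg (-a + ·) h
  rw [neg_add_cancel, zero_add, zero_add] at h'
  exact gyr_injective _ _ h'

theorem gyr_zero (a b : G) : gyr a b 0 = 0 := by
  apply add_right_injective (gyr a b 0)
  dsimp only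
  rw [add_zero, ← gyr_add, zero_add]

theorem gyr_zero_left (b c : G) : gyr 0 b c = c := by
  apply add_right_injective b
  simpa only [zero_add] using (gyrassoc 0 b c).symm

theorem gyr_neg_right_self (a c : G) : gyr a (-a) c = c := by
  rw [← loop, add_neg_cancel, gyr_zero_left]

theorem add_neg_cancel_left (a b : G) : a + (-a + b) = b := by
  rw [gyrassoc, add_neg_cancel, zero_add, gyr_neg_right_self]

theorem add_add_gyr_neg (a b : G) : a + b + gyr a b (-b) = a := by
  rw [← gyrassoc, add_neg_cancel, add_zero]

theorem gyr_gyr_neg_gyr (a b y : G) : gyr a (gyr a b (-b)) (gyr a b y) = y := by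
  set c := gyr a b (-b)
  have hloop : gyr a c = gyr (a + b) c := by
    rw [← loop (a + b) c, add_add_gyr_neg]
  apply add_right_injective a
  calc a + gyr a c (gyr a b y)
      = a + b + c + gyr (a + b) c (gyr a b y) := by rw [add_add_gyr_neg, hloop]
    _ = a + b + gyr a b (-b + y) := by rw [← gyrassoc, gyr_add]
    _ = a + y := by rw [← gyrassoc, add_neg_cancel_left]

theorem boxminus_add_cancel (a b : G) : boxminus a b + b = a :=
  calc boxminus a b + b
      = a + gyr a b (-b) + gyr a (gyr a b (-b)) (gyr a b b) := by rw [gyr_gyr_neg_gyr]; rfl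
    _ = a := by rw [← gyrassoc, ← gyr_add, neg_add_cancel, gyr_zero, add_zero]

theorem exists_add_mem_of_mem_image2_boxminus {V : Set G} {x : G}
    (hx : x ∈ Set.image2 boxminus V V) : ∃ b ∈ V, x + b ∈ V := by
  obtain ⟨a, ha, b, hb, rfl⟩ := hx
  exact ⟨b, hb, by rwa [boxminus_add_cancel]⟩

end Gyrogroup

section Topology

open Filter Topology

variable {G : Type*} [Gyrogroup G] [TopologicalSpace G]

theorem exists_mem_nhds_zero_notMem_image2_boxminus [ContinuousAdd G] [T2Space G] {x : G}
    (hx : x ≠ 0) : ∃ V ∈ 𝓝 (0 : G), x ∉ Set.image2 boxminus V V := by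
  obtain ⟨W₁, W₂, hW₁, hW₂, hxW₁, h0W₂, hW⟩ := t2_separation hx
  have htrans : (x + ·) ⁻¹' W₁ ∈ 𝓝 (0 : G) := by
    refine (continuous_const_add x).continuousAt.preimage_mem_nhds ?_
    rw [Gyrogroup.add_zero]
    exact hW₁.mem_nhds hxW₁
  refine ⟨W₂ ∩ (x + ·) ⁻¹' W₁, inter_mem (hW₂.mem_nhds h0W₂) htrans, fun hmem => ?_⟩
  obtain ⟨b, hb, hxb⟩ := Gyrogroup.exists_add_mem_of_mem_image2_boxminus hmem
  exact Set.disjoint_left.mp hW hb.2 hxb.1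

theorem biInter_image2_boxminus_subset_zero [ContinuousAdd G] [T2Space G] {γ : Set (Set G)}
    (hγ : (𝓝 (0 : G)).HasBasis (· ∈ γ) id) :
    ⋂ V ∈ γ, Set.image2 boxminus V V ⊆ {0} := by
  intro x hx
  by_contra hx0
  obtain ⟨W, hW, hxW⟩ := exists_mem_nhds_zero_notMem_image2_boxminus hx0
  obtain ⟨V, hVγ, hVW⟩ := hγ.mem_iff.mp hW
  exact hxW (Set.image2_subset hVW hVW (Set.mem_iInter₂.mp hx V hVγ))

theorem Hs_le_mk {γ : Set (Set G)} (hγ : ∀ V ∈ γ, V ∈ 𝓝 (0 : G))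
    (hγ0 : ⋂ V ∈ γ, Set.image2 boxminus V V ⊆ {0}) : Hs G ≤ Cardinal.mk γ :=
  csInf_le' fun _U hU =>
    ⟨γ, hγ, le_rfl, hγ0.trans (Set.singleton_subset_iff.mpr (mem_of_mem_nhds hU))⟩

end Topology

/-- Every first-countable Hausdorff paratopological gyrogroup satisfies Hs(G) ≤ ω. -/
theorem Hs_le_aleph0_of_firstCountable {G : Type*} [Gyrogroup G] [TopologicalSpace G]
    [ContinuousAdd G] [T2Space G] [FirstCountableTopology G] :
    Hs G ≤ Cardinal.aleph0 := by
  obtain ⟨V, hV⟩ := (nhds (0 : G)).exists_antitone_basis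
  have hbasis := hV.toHasBasis.to_image_id
  calc Hs G ≤ Cardinal.mk (V '' {_n | True}) :=
        Hs_le_mk (fun _W hW => hbasis.mem_of_mem hW) (biInter_image2_boxminus_subset_zero hbasis)
    _ ≤ Cardinal.aleph0 := ((Set.to_countable _).image V).le_aleph0
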